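/- arXiv:2203.09555 — 2 statements merged into one kernel-verified Lean document; each statement's English description precedes it below -/
import Mathlib

section
/- For every GFMT expressible by a tuple of ReLU-MPLang expressions, there exists a ReLU-MPNN expressing the same GFMT. That is, for every tuple (e_1, …, e_r) of MPLang expressions appropriate for input arity d in which every function application applies ReLU, there is a ReLU-MPNN N of type d → r such that N(G)(χ)(v) = (e_1(G)(χ)(v), …, e_r(G)(χ)(v)) for every graph G, every d-dimensional feature map χ on G, and every node v of G. -/
open scoped BigOperators

/-- A finite graph: nodes `Fin n`, with a symmetric, irreflexive adjacency relation. -/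
structure FinGraph where
  n : ℕ
  adj : Fin n → Fin n → Bool
  symm : ∀ u v, adj u v = adj v u
  irrefl : ∀ v, adj v v = false

namespace FinGraph

/-- The set of neighbors of `v` in `G`. -/
def neighbors (G : FinGraph) (v : Fin G.n) : Finset (Fin G.n) :=
  Finset.univ.filter fun u => G.adj v u

/-- The degree of a node. -/
def degree (G : FinGraph) (v : Fin G.n) : ℕ := (G.neighbors v).card

/-- `G` has degree at most `p` (i.e., `G ∈ 𝔾_p`). -/
def DegreeLE (G : FinGraph) (p : ℕ) : Prop := ∀ v, G.degree v ≤ p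

end FinGraph

/-- The rectified linear unit. -/
noncomputable def ReLU (x : ℝ) : ℝ := max 0 x

/-- An MPNN layer of type `d → r`: matrices `W₁, W₂ ∈ ℝ^{r×d}`, bias `b ∈ ℝ^r`,
and a continuous activation function `σ`. -/
structure Layer (d r : ℕ) where
  W₁ : Matrix (Fin r) (Fin d) ℝ
  W₂ : Matrix (Fin r) (Fin d) ℝ
  b : Fin r → ℝ
  σ : ℝ → ℝ
  hσ : Continuous σ

namespace Layer

/-- The GFMT defined by a layer:
`L(G)(χ)(v) = σ(W₁ χ(v) + W₂ Σ_{u ∈ N_G(v)} χ(u) + b)`, componentwise. -/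
noncomputable def eval {d r : ℕ} (L : Layer d r) (G : FinGraph)
    (χ : Fin G.n → Fin d → ℝ) (v : Fin G.n) : Fin r → ℝ :=
  fun i => L.σ (L.W₁.mulVec (χ v) i + L.W₂.mulVec (∑ u ∈ G.neighbors v, χ u) i + L.b i)

end Layer

/-- An MPNN: a nonempty sequence of layers with matching arities. -/
inductive MPNN : ℕ → ℕ → Type where
  | single {d r : ℕ} : Layer d r → MPNN d r
  | cons {d m r : ℕ} : Layer d m → MPNN m r → MPNN d r

namespace MPNN

/-- The GFMT defined by an MPNN: the sequential composition of its layers. -/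
noncomputable def eval : {d r : ℕ} → MPNN d r → (G : FinGraph) →
    (Fin G.n → Fin d → ℝ) → (Fin G.n → Fin r → ℝ)
  | _, _, .single L, G, χ => L.eval G χ
  | _, _, .cons L N, G, χ => N.eval G (L.eval G χ)

/-- A ReLU-MPNN: every layer uses ReLU, except that the last layer may use the identity. -/
def IsReLU : {d r : ℕ} → MPNN d r → Prop
  | _, _, .single L => L.σ = ReLU ∨ L.σ = id
  | _, _, .cons L N => L.σ = ReLU ∧ N.IsReLU

/-- The set of activation functions used in the layers of an MPNN. -/
def activations : {d r : ℕ} → MPNN d r → Set (ℝ → ℝ)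
  | _, _, .single L => {L.σ}
  | _, _, .cons L N => insert L.σ N.activations

/-- The number of layers of an MPNN. -/
def numLayers : {d r : ℕ} → MPNN d r → ℕ
  | _, _, .single _ => 1
  | _, _, .cons _ N => N.numLayers + 1

end MPNN

/-- MPLang expressions: `e ::= 1 | P_i | a·e | e + e | f(e) | ◇e`
with `f : ℝ → ℝ` continuous. -/
inductive MPLang : Type where
  | one : MPLang
  | proj : ℕ → MPLang
  | scale : ℝ → MPLang → MPLang
  | add : MPLang → MPLang → MPLang
  | app : (f : ℝ → ℝ) → Continuous f → MPLang → MPLang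
  | diamond : MPLang → MPLang

namespace MPLang

/-- `e` is appropriate for input arity `d`: every `P_i` has `1 ≤ i ≤ d`. -/
def Appropriate (d : ℕ) : MPLang → Prop
  | .one => True
  | .proj i => 1 ≤ i ∧ i ≤ d
  | .scale _ e => e.Appropriate d
  | .add e₁ e₂ => e₁.Appropriate d ∧ e₂.Appropriate d
  | .app _ _ e => e.Appropriate d
  | .diamond e => e.Appropriate d

/-- Semantics of MPLang expressions (the `P_i` are 1-based; out-of-range
projections, which cannot occur in expressions appropriate for `d`, yield 0). -/
noncomputable def eval (d : ℕ) : MPLang → (G : FinGraph) →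
    (Fin G.n → Fin d → ℝ) → Fin G.n → ℝ
  | .one, _, _, _ => 1
  | .proj i, _, χ, v => if h : i - 1 < d then χ v ⟨i - 1, h⟩ else 0
  | .scale a e, G, χ, v => a * e.eval d G χ v
  | .add e₁ e₂, G, χ, v => e₁.eval d G χ v + e₂.eval d G χ v
  | .app f _ e, G, χ, v => f (e.eval d G χ v)
  | .diamond e, G, χ, v => ∑ u ∈ G.neighbors v, e.eval d G χ u

/-- All function applications in the expression apply functions from `F`. -/
def AppsIn (F : Set (ℝ → ℝ)) : MPLang → Prop
  | .one => True
  | .proj _ => True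
  | .scale _ e => e.AppsIn F
  | .add e₁ e₂ => e₁.AppsIn F ∧ e₂.AppsIn F
  | .app f _ e => f ∈ F ∧ e.AppsIn F
  | .diamond e => e.AppsIn F

/-- A ReLU-MPLang expression: all function applications apply ReLU. -/
def IsReLU (e : MPLang) : Prop := e.AppsIn {ReLU}

end MPLang

/-!
A ReLU layer loses the sign of a value `x`, but `x = ReLU x - ReLU (-x)` is a linear function
of the nonnegative pair `(ReLU x, ReLU (-x))`, and nonnegative values pass unchanged through
further ReLU layers. So we grow an all-ReLU network one output coordinate at a time, copying
its previous (nonnegative) outputs, and track the space of GFMTs that are linear readouts of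
its output. This space is closed under linear combinations for free; one more layer adds
`ReLU (f + ◇g + c)` for readouts `f`, `g`, which yields `1`, `ReLU f` and
`◇f = ReLU (◇f) - ReLU (-◇f)`. The inputs are readouts after the first layer
`x ↦ (ReLU x, ReLU (-x))`, and a final identity-activated layer reads off the tuple.
-/

lemma relu_nonneg (x : ℝ) : 0 ≤ ReLU x := le_max_left 0 x

lemma relu_of_nonneg {x : ℝ} (hx : 0 ≤ x) : ReLU x = x := max_eq_right hx

lemma relu_sub_relu_neg (x : ℝ) : ReLU x - ReLU (-x) = x := by
  rw [ReLU, ReLU, max_comm, max_comm 0]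
  exact max_zero_sub_max_neg_zero_eq_self x

lemma continuous_relu : Continuous ReLU := continuous_const.max continuous_id

/-- A GFMT of type `d → 1`, its output read as a scalar. -/
abbrev ScalarGFMT (d : ℕ) : Type := (G : FinGraph) → (Fin G.n → Fin d → ℝ) → Fin G.n → ℝ

/-- The GFMT `P_i`, indexed from `0`. -/
def inputFeature {d : ℕ} (i : Fin d) : ScalarGFMT d := fun _ χ v => χ v i

noncomputable def extendLayer {m : ℕ} (w₁ w₂ : Fin m → ℝ) (c : ℝ) : Layer m (m + 1) where
  W₁ := Fin.snoc (fun k => Pi.single k 1) w₁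
  W₂ := Fin.snoc 0 w₂
  b := Fin.snoc 0 c
  σ := ReLU
  hσ := continuous_relu

section extendLayer

variable {m : ℕ} (w₁ w₂ : Fin m → ℝ) (c : ℝ) (G : FinGraph) (χ : Fin G.n → Fin m → ℝ)
  (v : Fin G.n)

lemma extendLayer_eval_castSucc (k : Fin m) :
    (extendLayer w₁ w₂ c).eval G χ v k.castSucc = ReLU (χ v k) := by
  simp [extendLayer, Layer.eval, Matrix.mulVec]

lemma extendLayer_eval_last :
    (extendLayer w₁ w₂ c).eval G χ v (Fin.last m) =
      ReLU (w₁ ⬝ᵥ χ v + w₂ ⬝ᵥ ∑ u ∈ G.neighbors v, χ u + c) := by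
  simp [extendLayer, Layer.eval, Matrix.mulVec]

end extendLayer

noncomputable def pairLayer (d : ℕ) : Layer d (d + d) where
  W₁ := Fin.append (fun i => Pi.single i 1) (fun i => Pi.single i (-1))
  W₂ := 0
  b := 0
  σ := ReLU
  hσ := continuous_relu

namespace MPNN

variable {d m : ℕ}

def snoc : {d m r : ℕ} → MPNN d m → Layer m r → MPNN d r
  | _, _, _, .single L₀, L => .cons L₀ (.single L)
  | _, _, _, .cons L₀ N, L => .cons L₀ (N.snoc L)

lemma eval_snoc : ∀ {d m r : ℕ} (N : MPNN d m) (L : Layer m r) (G : FinGraph)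
    (χ : Fin G.n → Fin d → ℝ), (N.snoc L).eval G χ = L.eval G (N.eval G χ)
  | _, _, _, .single _, _, _, _ => rfl
  | _, _, _, .cons L₀ N, L, G, χ => eval_snoc N L G (L₀.eval G χ)

lemma activations_snoc : ∀ {d m r : ℕ} (N : MPNN d m) (L : Layer m r),
    (N.snoc L).activations = insert L.σ N.activations
  | _, _, _, .single _, _ => Set.pair_comm _ _
  | _, _, _, .cons L₀ N, L => by
    simp only [snoc, activations, activations_snoc N L, Set.insert_comm]

lemma isReLU_snoc : ∀ {d m r : ℕ} (N : MPNN d m) (L : Layer m r),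
    N.activations ⊆ {ReLU} → (L.σ = ReLU ∨ L.σ = id) → (N.snoc L).IsReLU
  | _, _, _, .single _, _, hN, hL => ⟨Set.singleton_subset_singleton.mp hN, hL⟩
  | _, _, _, .cons _ N, L, hN, hL =>
    ⟨hN (Set.mem_insert _ _), isReLU_snoc N L ((Set.subset_insert _ _).trans hN) hL⟩

lemma eval_nonneg : ∀ {d m : ℕ} (N : MPNN d m), N.activations ⊆ {ReLU} →
    ∀ (G : FinGraph) (χ : Fin G.n → Fin d → ℝ) (v : Fin G.n) (k : Fin m), 0 ≤ N.eval G χ v k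
  | _, _, .single L, hN, _, _, _, _ => by
    show 0 ≤ L.σ _
    rw [Set.singleton_subset_singleton.mp hN]
    exact relu_nonneg _
  | _, _, .cons _ N, hN, _, _, _, _ => eval_nonneg N ((Set.subset_insert _ _).trans hN) _ _ _ _

noncomputable def feature (N : MPNN d m) (k : Fin m) : ScalarGFMT d := fun G χ v => N.eval G χ v k

def readouts (N : MPNN d m) : Submodule ℝ (ScalarGFMT d) :=
  Submodule.span ℝ (Set.range N.feature)

lemma feature_mem_readouts (N : MPNN d m) (k : Fin m) : N.feature k ∈ N.readouts :=
  Submodule.subset_span ⟨k, rfl⟩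

lemma mem_readouts_iff (N : MPNN d m) (f : ScalarGFMT d) :
    f ∈ N.readouts ↔ ∃ w : Fin m → ℝ, ∀ G χ v, f G χ v = w ⬝ᵥ N.eval G χ v := by
  rw [readouts, Submodule.mem_span_range_iff_exists_fun]
  refine exists_congr fun w => ⟨fun h G χ v => ?_, fun h => ?_⟩
  · simp [← h, dotProduct, feature]
  · funext G χ v
    simp [h, dotProduct, feature]

lemma inputFeature_mem_readouts_single_pairLayer (i : Fin d) :
    inputFeature i ∈ (MPNN.single (pairLayer d)).readouts := by
  have hpos : (MPNN.single (pairLayer d)).feature (Fin.castAdd d i) =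
      fun _ χ v => ReLU (χ v i) := by
    funext G χ v
    simp [feature, eval, Layer.eval, pairLayer, Matrix.mulVec]
  have hneg : (MPNN.single (pairLayer d)).feature (Fin.natAdd d i) =
      fun _ χ v => ReLU (-χ v i) := by
    funext G χ v
    simp [feature, eval, Layer.eval, pairLayer, Matrix.mulVec, -Fin.natAdd_eq_addNat]
  have h : inputFeature i = (MPNN.single (pairLayer d)).feature (Fin.castAdd d i) -
      (MPNN.single (pairLayer d)).feature (Fin.natAdd d i) := by
    rw [hpos, hneg]
    funext G χ v
    exact (relu_sub_relu_neg _).symm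
  rw [h]
  exact sub_mem (feature_mem_readouts _ _) (feature_mem_readouts _ _)

lemma readouts_le_readouts_snoc_extendLayer (N : MPNN d m) (hN : N.activations ⊆ {ReLU})
    (w₁ w₂ : Fin m → ℝ) (c : ℝ) : N.readouts ≤ (N.snoc (extendLayer w₁ w₂ c)).readouts := by
  refine Submodule.span_le.mpr ?_
  rintro _ ⟨k, rfl⟩
  have hk : N.feature k = (N.snoc (extendLayer w₁ w₂ c)).feature k.castSucc := by
    funext G χ v
    rw [feature, feature, eval_snoc, extendLayer_eval_castSucc,
      relu_of_nonneg (N.eval_nonneg hN G χ v k)]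
  rw [hk]
  exact feature_mem_readouts _ _

def Admissible (N : MPNN d m) : Prop :=
  N.activations ⊆ {ReLU} ∧ ∀ i, inputFeature i ∈ N.readouts

lemma admissible_single_pairLayer : (MPNN.single (pairLayer d)).Admissible :=
  ⟨subset_rfl, inputFeature_mem_readouts_single_pairLayer⟩

lemma Admissible.snoc_extendLayer {N : MPNN d m} (hN : N.Admissible) (w₁ w₂ : Fin m → ℝ)
    (c : ℝ) : (N.snoc (extendLayer w₁ w₂ c)).Admissible := by
  refine ⟨?_, fun i => N.readouts_le_readouts_snoc_extendLayer hN.1 w₁ w₂ c (hN.2 i)⟩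
  rw [activations_snoc]
  exact Set.insert_subset rfl hN.1

lemma exists_layer_id_eval_eq {r : ℕ} (N : MPNN d m) (f : Fin r → ScalarGFMT d)
    (hf : ∀ j, f j ∈ N.readouts) :
    ∃ L : Layer m r, L.σ = id ∧ ∀ G χ v j, L.eval G (N.eval G χ) v j = f j G χ v := by
  choose w hw using fun j => (N.mem_readouts_iff (f j)).mp (hf j)
  exact ⟨⟨w, 0, 0, id, continuous_id⟩, rfl, fun G χ v j => by
    simp [Layer.eval, Matrix.mulVec, hw]⟩

end MPNN

open MPNN

def ReLUAttainable {d : ℕ} (f : ScalarGFMT d) : Prop :=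
  ∀ (m : ℕ) (N : MPNN d m), N.Admissible →
    ∃ (m' : ℕ) (N' : MPNN d m'), N'.Admissible ∧ N.readouts ≤ N'.readouts ∧ f ∈ N'.readouts

namespace ReLUAttainable

variable {d : ℕ}

lemma exists_subset_readouts {s : Finset (ScalarGFMT d)} (hs : ∀ f ∈ s, ReLUAttainable f)
    {m : ℕ} (N : MPNN d m) (hN : N.Admissible) :
    ∃ (m' : ℕ) (N' : MPNN d m'), N'.Admissible ∧ N.readouts ≤ N'.readouts ∧
      ↑s ⊆ (N'.readouts : Set (ScalarGFMT d)) := by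
  classical
  induction s using Finset.induction_on with
  | empty => exact ⟨m, N, hN, le_rfl, by simp⟩
  | insert f s _ ih =>
    obtain ⟨m₁, N₁, hN₁, hle₁, hs₁⟩ := ih fun g hg => hs g (Finset.mem_insert_of_mem hg)
    obtain ⟨m₂, N₂, hN₂, hle₂, hf₂⟩ := hs f (Finset.mem_insert_self f s) m₁ N₁ hN₁
    refine ⟨m₂, N₂, hN₂, hle₁.trans hle₂, ?_⟩
    rw [Finset.coe_insert]
    exact Set.insert_subset hf₂ (hs₁.trans hle₂)

lemma inputFeature (i : Fin d) : ReLUAttainable (inputFeature i) :=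
  fun m N hN => ⟨m, N, hN, le_rfl, hN.2 i⟩

lemma zero : ReLUAttainable (0 : ScalarGFMT d) :=
  fun m N hN => ⟨m, N, hN, le_rfl, zero_mem _⟩

lemma smul {f : ScalarGFMT d} (hf : ReLUAttainable f) (a : ℝ) : ReLUAttainable (a • f) := by
  intro m N hN
  obtain ⟨m', N', hN', hle, hf'⟩ := hf m N hN
  exact ⟨m', N', hN', hle, Submodule.smul_mem _ a hf'⟩

lemma add {f g : ScalarGFMT d} (hf : ReLUAttainable f) (hg : ReLUAttainable g) :
    ReLUAttainable (f + g) := by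
  classical
  intro m N hN
  obtain ⟨m', N', hN', hle, hfg⟩ := exists_subset_readouts (s := {f, g}) (by simp [hf, hg]) N hN
  exact ⟨m', N', hN', hle, add_mem (hfg (by simp)) (hfg (by simp))⟩

lemma sub {f g : ScalarGFMT d} (hf : ReLUAttainable f) (hg : ReLUAttainable g) :
    ReLUAttainable (f - g) := by
  simpa [sub_eq_add_neg] using hf.add (hg.smul (-1))

/-- The only closure property that costs a new layer. -/
lemma relu_add_aggregate {f₁ f₂ : ScalarGFMT d} (hf₁ : ReLUAttainable f₁)
    (hf₂ : ReLUAttainable f₂) (c : ℝ) :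
    ReLUAttainable fun G χ v => ReLU (f₁ G χ v + ∑ u ∈ G.neighbors v, f₂ G χ u + c) := by
  classical
  intro m N hN
  obtain ⟨m₁, N₁, hN₁, hle, hf⟩ :=
    exists_subset_readouts (s := {f₁, f₂}) (by simp [hf₁, hf₂]) N hN
  obtain ⟨w₁, hw₁⟩ := (N₁.mem_readouts_iff f₁).mp (hf (by simp))
  obtain ⟨w₂, hw₂⟩ := (N₁.mem_readouts_iff f₂).mp (hf (by simp))
  refine ⟨m₁ + 1, N₁.snoc (extendLayer w₁ w₂ c), hN₁.snoc_extendLayer w₁ w₂ c,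
    hle.trans (N₁.readouts_le_readouts_snoc_extendLayer hN₁.1 w₁ w₂ c), ?_⟩
  convert (N₁.snoc (extendLayer w₁ w₂ c)).feature_mem_readouts (Fin.last m₁) using 1
  funext G χ v
  simp only [feature, eval_snoc, extendLayer_eval_last, hw₁, hw₂, dotProduct_sum]

lemma one : ReLUAttainable (fun _ _ _ => 1 : ScalarGFMT d) := by
  simpa [ReLU] using relu_add_aggregate zero zero 1

lemma relu {f : ScalarGFMT d} (hf : ReLUAttainable f) :
    ReLUAttainable fun G χ v => ReLU (f G χ v) := by
  simpa using relu_add_aggregate hf zero 0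

lemma aggregate {f : ScalarGFMT d} (hf : ReLUAttainable f) :
    ReLUAttainable fun G χ v => ∑ u ∈ G.neighbors v, f G χ u := by
  have h := (relu_add_aggregate zero hf 0).sub (relu_add_aggregate zero (hf.smul (-1)) 0)
  convert h using 1
  funext G χ v
  simp [relu_sub_relu_neg]

end ReLUAttainable

lemma MPLang.reluAttainable_eval {d : ℕ} :
    ∀ e : MPLang, e.Appropriate d → e.IsReLU → ReLUAttainable (e.eval d)
  | .one, _, _ => ReLUAttainable.one
  | .proj i, ⟨hi₁, hi₂⟩, _ => by
    have hi : i - 1 < d := by omega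
    convert ReLUAttainable.inputFeature ⟨i - 1, hi⟩ using 1
    funext G χ v
    simp [MPLang.eval, inputFeature, hi]
  | .scale a e, happ, hrelu => (reluAttainable_eval e happ hrelu).smul a
  | .add e₁ e₂, happ, hrelu =>
    (reluAttainable_eval e₁ happ.1 hrelu.1).add (reluAttainable_eval e₂ happ.2 hrelu.2)
  | .app _ _ e, happ, ⟨rfl, hrelu⟩ => (reluAttainable_eval e happ hrelu).relu
  | .diamond e, happ, hrelu => (reluAttainable_eval e happ hrelu).aggregate

/-- Theorem 1 of the paper: every GFMT expressible by a tuple of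
ReLU-MPLang expressions is also expressible as a ReLU-MPNN. -/
theorem relu_mplang_to_relu_mpnn (d r : ℕ) (es : Fin r → MPLang)
    (happ : ∀ j, (es j).Appropriate d) (hrelu : ∀ j, (es j).IsReLU) :
    ∃ N : MPNN d r, N.IsReLU ∧
      ∀ (G : FinGraph) (χ : Fin G.n → Fin d → ℝ) (v : Fin G.n) (j : Fin r),
        N.eval G χ v j = (es j).eval d G χ v := by
  classical
  obtain ⟨m, N, hN, -, hes⟩ := ReLUAttainable.exists_subset_readouts
    (s := Finset.univ.image fun j => (es j).eval d)
    (by simpa using fun j => (es j).reluAttainable_eval (happ j) (hrelu j))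
    _ admissible_single_pairLayer
  obtain ⟨L, hLσ, hL⟩ := N.exists_layer_id_eval_eq (fun j => (es j).eval d)
    fun j => hes (by simp)
  exact ⟨N.snoc L, N.isReLU_snoc L hN.1 (Or.inr hLσ), fun G χ v j => by
    rw [eval_snoc, hL]⟩
end

section
/- Let L = L₁; …; L_n and K = K₁; …; K_n be two MPNNs with the same number n ≥ 2 of layers and the same input arity d. Then the concatenation of the GFMTs expressed by L and K satisfies L | K = (L₁ | K₁); (L₂ ∥ K₂); …; (L_n ∥ K_n), where L₁ | K₁ denotes the GFMT concatenating the outputs of the first layers and L_i ∥ K_i denotes parallel composition of the i-th layers. -/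
open scoped BigOperators

/-- Evaluation of the first `k` layers of a chain of `n` MPNN layers with arity
sequence `a` (the MPNN `L₁; …; L_n` has layer `L_{i+1} = Ls i` of type
`a i → a (i+1)`). -/
noncomputable def chainEval {n : ℕ} (a : Fin (n + 1) → ℕ)
    (Ls : ∀ i : Fin n, Layer (a i.castSucc) (a i.succ))
    (G : FinGraph) (χ : Fin G.n → Fin (a ⟨0, by omega⟩) → ℝ) :
    (k : ℕ) → (hk : k ≤ n) → Fin G.n → Fin (a ⟨k, by omega⟩) → ℝ
  | 0, _ => χ
  | k + 1, hk => (Ls ⟨k, by omega⟩).eval G (chainEval a Ls G χ k (by omega))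

/-- Evaluation of the first `k` stages of the GFMT
`(L₁ | K₁); (L₂ ∥ K₂); …; (L_n ∥ K_n)`:  the first stage is the concatenation
of the GFMTs of the first layers, each further stage is the parallel composition
of the corresponding layers. -/
noncomputable def concatParChainEval {n : ℕ} (aL aK : Fin (n + 1) → ℕ)
    (Ls : ∀ i : Fin n, Layer (aL i.castSucc) (aL i.succ))
    (Ks : ∀ i : Fin n, Layer (aK i.castSucc) (aK i.succ))
    (G : FinGraph) (χL : Fin G.n → Fin (aL ⟨0, by omega⟩) → ℝ)
    (χK : Fin G.n → Fin (aK ⟨0, by omega⟩) → ℝ) :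
    (k : ℕ) → (h1 : 1 ≤ k) → (hk : k ≤ n) →
      Fin G.n → Fin (aL ⟨k, by omega⟩ + aK ⟨k, by omega⟩) → ℝ
  | 0, h1, _ => absurd h1 (by omega)
  | 1, _, hk => fun v =>
      Fin.append ((Ls ⟨0, by omega⟩).eval G χL v) ((Ks ⟨0, by omega⟩).eval G χK v)
  | k + 2, _, hk => fun v =>
      Fin.append
        ((Ls ⟨k + 1, by omega⟩).eval G
          (fun w i => concatParChainEval aL aK Ls Ks G χL χK (k + 1)
            (by omega) (by omega) w (Fin.castAdd _ i)) v)
        ((Ks ⟨k + 1, by omega⟩).eval G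
          (fun w i => concatParChainEval aL aK Ls Ks G χL χK (k + 1)
            (by omega) (by omega) w (Fin.natAdd _ i)) v)

theorem concatParChainEval_eq_append {n : ℕ} (aL aK : Fin (n + 1) → ℕ)
    (Ls : ∀ i : Fin n, Layer (aL i.castSucc) (aL i.succ))
    (Ks : ∀ i : Fin n, Layer (aK i.castSucc) (aK i.succ))
    (G : FinGraph) (χL : Fin G.n → Fin (aL ⟨0, by omega⟩) → ℝ)
    (χK : Fin G.n → Fin (aK ⟨0, by omega⟩) → ℝ) :
    ∀ (k : ℕ) (h1 : 1 ≤ k) (hk : k ≤ n) (v : Fin G.n),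
      concatParChainEval aL aK Ls Ks G χL χK k h1 hk v
        = Fin.append (chainEval aL Ls G χL k hk v) (chainEval aK Ks G χK k hk v)
  | 0, h1, _, _ => absurd h1 (by omega)
  | 1, _, _, _ => rfl
  | k + 2, _, hk, v => by
    -- the two blocks of an appended feature map are its halves, so each parallel
    -- stage feeds `Ls` and `Ks` exactly the outputs of their own chains
    have ih := concatParChainEval_eq_append aL aK Ls Ks G χL χK (k + 1) (by omega) (by omega)
    simp only [concatParChainEval, ih, Fin.append_left, Fin.append_right]
    rfl

/-- for two MPNNs `L = L₁; …; L_n` and `K = K₁; …; K_n` with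
the same number `n ≥ 2` of layers and the same input arity, the concatenation of
the GFMTs they express equals `(L₁ | K₁); (L₂ ∥ K₂); …; (L_n ∥ K_n)`. -/
theorem mpnn_concat_eq_concat_par_chain (n : ℕ) (hn : 2 ≤ n)
    (aL aK : Fin (n + 1) → ℕ) (h0 : aL ⟨0, by omega⟩ = aK ⟨0, by omega⟩)
    (Ls : ∀ i : Fin n, Layer (aL i.castSucc) (aL i.succ))
    (Ks : ∀ i : Fin n, Layer (aK i.castSucc) (aK i.succ))
    (G : FinGraph) (χ : Fin G.n → Fin (aL ⟨0, by omega⟩) → ℝ) (v : Fin G.n) :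
    Fin.append (chainEval aL Ls G χ n le_rfl v)
        (chainEval aK Ks G (fun w i => χ w (Fin.cast h0.symm i)) n le_rfl v)
      = concatParChainEval aL aK Ls Ks G χ
          (fun w i => χ w (Fin.cast h0.symm i)) n (by omega) le_rfl v := by
  exact (concatParChainEval_eq_append aL aK Ls Ks G χ _ n (by omega) le_rfl v).symm
end
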